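/- Let η be a distribution on a finite set V of size r, let ρ ∈ (0,1), and let n ∈ ℕ. For each i ∈ {1,…,n} let t_i, w_i ∈ [0,1]^V, let Λ be the distribution on [0,1]^V of t_I for I uniformly random in {1,…,n}, and let Λ̂ be the distribution of w_I for I uniformly random in {1,…,n}. If for at least (1−ρ)·n of the indices i ∈ {1,…,n} it holds that |t_i(v) − w_i(v)| ≤ ρ for every v ∈ V with η(v) ≥ ρ/r, then d_EM^η(Λ, Λ̂) ≤ 3ρ. -/

import Mathlib

open scoped BigOperators

namespace HugeObject

noncomputable section

/-- A finitely supported probability distribution on `Ω`, given by its mass function. -/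
def IsDist {Ω : Type*} (μ : Ω → ℝ) : Prop :=
  (∀ x, 0 ≤ μ x) ∧ (Function.support μ).Finite ∧ ∑ᶠ x, μ x = 1

/-- Total variation distance between two mass functions. -/
def dTV {Ω : Type*} (μ τ : Ω → ℝ) : ℝ :=
  (1 / 2) * ∑ᶠ x, |μ x - τ x|

/-- `T` is a transfer distribution (coupling) between `μ` and `τ`. -/
def IsCoupling {A B : Type*} (T : A × B → ℝ) (μ : A → ℝ) (τ : B → ℝ) : Prop :=
  IsDist T ∧ (∀ a, ∑ᶠ b, T (a, b) = μ a) ∧ (∀ b, ∑ᶠ a, T (a, b) = τ b)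

/-- Earth Mover distance with respect to a distance function `d`: the infimum, over
all transfer distributions between `μ` and `τ`, of the expected distance. -/
def dEM {Ω : Type*} (d : Ω → Ω → ℝ) (μ τ : Ω → ℝ) : ℝ :=
  sInf {c | ∃ T : Ω × Ω → ℝ, IsCoupling T μ τ ∧ c = ∑ᶠ p : Ω × Ω, T p * d p.1 p.2}

/-- η-weighted ℓ1 distance between vectors. -/
def wl1 {A : Type*} (η : A → ℝ) (x y : A → ℝ) : ℝ := ∑ᶠ a, η a * |x a - y a|

/-- A distribution on vectors is supported on `[0,1]^A`. -/
def SuppIn01 {A : Type*} (Λ : (A → ℝ) → ℝ) : Prop :=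
  ∀ t, Λ t ≠ 0 → ∀ a, t a ∈ Set.Icc (0 : ℝ) 1

/-- Empirical distribution of the tuple `t` (distribution of `t I` for uniform `I`). -/
def empDist {n : ℕ} {α : Type*} (t : Fin n → α) : α → ℝ :=
  fun u => (Nat.card {i : Fin n // t i = u} : ℝ) / n

/-- Normalized Hamming distance on `{0,1}^n`. -/
def normHamming (n : ℕ) (x y : Fin n → Bool) : ℝ :=
  (Nat.card {i : Fin n // x i ≠ y i} : ℝ) / n

section Detailing

variable {n : ℕ} {A : Type*} [Fintype A]

/-- Weight distribution (second marginal) of a detailing. -/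
def weight (ξ : (Fin n → Bool) × A → ℝ) (a : A) : ℝ := ∑ x : Fin n → Bool, ξ (x, a)

/-- `ξ` is a detailing of `μ` with respect to `A`: a distribution on
`{0,1}^n × A` whose first marginal is `μ`. -/
def IsDetailing (ξ : (Fin n → Bool) × A → ℝ) (μ : (Fin n → Bool) → ℝ) : Prop :=
  IsDist ξ ∧ ∀ x, ∑ a : A, ξ (x, a) = μ x

/-- Component distribution `μ_a` of a detailing. -/
def component (ξ : (Fin n → Bool) × A → ℝ) (a : A) : (Fin n → Bool) → ℝ :=
  fun x => ξ (x, a) / weight ξ a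

/-- The type of index `i`: `t_i a = Pr_{x ~ μ_a} [x i = 1]` (0 when the weight vanishes). -/
def typeOf (ξ : (Fin n → Bool) × A → ℝ) (i : Fin n) : A → ℝ :=
  fun a => (∑ x : Fin n → Bool, if x i then ξ (x, a) else 0) / weight ξ a

/-- The type distribution of a detailing: distribution of `typeOf ξ I` for uniform `I`. -/
def typeDist (ξ : (Fin n → Bool) × A → ℝ) : (A → ℝ) → ℝ :=
  empDist (fun i : Fin n => typeOf ξ i)

/-- The index of a detailing. -/
def ind (ξ : (Fin n → Bool) × A → ℝ) : ℝ :=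
  (∑ i : Fin n, ∑ a : A, weight ξ a * typeOf ξ i a ^ 2) / n

end Detailing

section Goodness

variable {n q : ℕ}

/-- Marginal of coordinate `j`. -/
def margAt (ν : (Fin n → Bool) → ℝ) (j : Fin n) : Bool → ℝ :=
  fun b => ∑ x : Fin n → Bool, if x j = b then ν x else 0

/-- Joint distribution of the coordinates listed in `J`. -/
def jointAt (ν : (Fin n → Bool) → ℝ) (J : Fin q → Fin n) : (Fin q → Bool) → ℝ :=
  fun y => ∑ x : Fin n → Bool, if ∀ ℓ, x (J ℓ) = y ℓ then ν x else 0

/-- The tuple `J` is ε-independent with respect to `ν`. -/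
def EpsIndep (ε : ℝ) (ν : (Fin n → Bool) → ℝ) (J : Fin q → Fin n) : Prop :=
  dTV (jointAt ν J) (fun y => ∏ ℓ, margAt ν (J ℓ) (y ℓ)) ≤ ε

/-- A distribution on `{0,1}^n` is (ε,q)-good. -/
def IsGoodDist (ε : ℝ) (q : ℕ) (ν : (Fin n → Bool) → ℝ) : Prop :=
  (1 - ε) * (n : ℝ) ^ q ≤ (Nat.card {J : Fin q → Fin n // EpsIndep ε ν J} : ℝ)

/-- A detailing is (ε,q)-good. -/
def IsGoodDetailing {A : Type*} [Fintype A] (ε : ℝ) (q : ℕ)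
    (ξ : (Fin n → Bool) × A → ℝ) : Prop :=
  ∃ J : Finset A, 1 - ε ≤ ∑ a ∈ J, weight ξ a ∧ ∀ a ∈ J, IsGoodDist ε q (component ξ a)

end Goodness

/-- The simulated distribution `D_sim(η, Λ)` on `{0,1}^{s×q}`. -/
def Dsim {A : Type*} [Fintype A] (s q : ℕ) (η : A → ℝ) (Λ : (A → ℝ) → ℝ) :
    (Fin s → Fin q → Bool) → ℝ :=
  fun M => ∑ᶠ T : Fin q → (A → ℝ),
    (∏ j, Λ (T j)) * ∑ a : Fin s → A, (∏ i, η (a i)) *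
      ∏ i : Fin s, ∏ j : Fin q, if M i j then T j (a i) else 1 - T j (a i)

/-- The canonical (s,q) test distribution `D_test` for `μ`. -/
def Dtest (s q n : ℕ) (μ : (Fin n → Bool) → ℝ) : (Fin s → Fin q → Bool) → ℝ :=
  fun M => (∑ J : Fin q → Fin n, ∑ x : Fin s → Fin n → Bool,
    (∏ i, μ (x i)) * (if ∀ i ℓ, x i (J ℓ) = M i ℓ then (1 : ℝ) else 0)) / (n : ℝ) ^ q

/-- Flat refinement of the detailing `ξ` with respect to `η` on `A × B`. -/
def flatRef {n : ℕ} {A B : Type*} [Fintype A] (ξ : (Fin n → Bool) × A → ℝ)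
    (η : A × B → ℝ) : (Fin n → Bool) × (A × B) → ℝ :=
  fun p => η p.2 * component ξ p.2.1 p.1

/-- One-step transition probability of the Change-types construction:
probability of outputting `yi` at a coordinate with source value `xi`,
source type value `h1` and target type value `h2`. -/
def flipStep (h1 h2 : ℝ) (xi yi : Bool) : ℝ :=
  if xi then (if yi then 1 - max 0 ((h1 - h2) / h1) else max 0 ((h1 - h2) / h1))
  else (if yi then max 0 ((h2 - h1) / (1 - h1)) else 1 - max 0 ((h2 - h1) / (1 - h1)))

/-- The output distribution `Ξ` of the Change-types construction. -/
def changeTypes {n : ℕ} {A B : Type*} [Fintype A] (ξ : (Fin n → Bool) × A → ℝ)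
    (η : A × B → ℝ) (H : Fin n → (A × B → ℝ) × (A × B → ℝ)) :
    (Fin n → Bool) × (Fin n → Bool) × (A × B) → ℝ :=
  fun p => η p.2.2 * component ξ p.2.2.1 p.1 *
    ∏ i, flipStep ((H i).1 p.2.2) ((H i).2 p.2.2) (p.1 i) (p.2.1 i)

/-- Pushforward of a mass function along `f`. -/
def push {α β : Type*} (f : α → β) (μ : α → ℝ) : β → ℝ :=
  fun b => ∑ᶠ a ∈ {a | f a = b}, μ a

/-- Rounding to the nearest integer multiple of `ρ`. -/
def roundMul (ρ x : ℝ) : ℝ := ρ * round (x / ρ)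

/-- Adjustment of `η` to `ν`. -/
def adjust {A B : Type*} [Fintype B] (ν : A → ℝ) (η : A × B → ℝ) : A × B → ℝ :=
  fun p => ν p.1 * (η p / ∑ b : B, η (p.1, b))

end
end HugeObject

open HugeObject

/-! Couple the two empirical distributions through the common index: `(t I, w I)` for uniform `I`.
Its cost is the average of `wl1 η (t i) (w i)`. For a good index this is at most `2ρ`: the
coordinates with `η v ≥ ρ/r` contribute at most `ρ`, and the remaining at most `r` coordinates
carry weight below `ρ/r` each. A bad index costs at most `1`, and at most `ρ n` indices are bad. -/

open Finset in
theorem Fintype.sum_le_of_card_subtype_ge {ι : Type*} [Fintype ι] (p : ι → Prop) [DecidablePred p]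
    {g : ι → ℝ} {c ρ : ℝ} (hc : 0 ≤ c) (hg : ∀ i, g i ≤ 1) (hp : ∀ i, p i → g i ≤ c)
    (hcard : (1 - ρ) * Fintype.card ι ≤ Nat.card {i // p i}) :
    ∑ i, g i ≤ (c + ρ) * Fintype.card ι := by
  rw [Nat.card_eq_fintype_card, Fintype.card_subtype] at hcard
  have hsplit := Finset.card_filter_add_card_filter_not (s := Finset.univ) p
  rw [Finset.card_univ] at hsplit
  have hgood : ∑ i with p i, g i ≤ #{i | p i} * c := by
    simpa using Finset.sum_le_sum fun i hi => hp i (Finset.mem_filter.1 hi).2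
  have hbad : ∑ i with ¬p i, g i ≤ #{i | ¬p i} := by
    simpa using Finset.sum_le_sum fun i (_ : i ∈ Finset.univ.filter (¬p ·)) => hg i
  have hsplit' : (#{i | p i} : ℝ) + #{i | ¬p i} = Fintype.card ι := by exact_mod_cast hsplit
  have hle : (#{i | p i} : ℝ) ≤ Fintype.card ι := by exact_mod_cast Finset.card_le_univ _
  rw [← Finset.sum_filter_add_sum_filter_not Finset.univ p]
  nlinarith

namespace HugeObject

section EmpiricalDistribution

variable {n : ℕ} {α β : Type*}

open Classical in
theorem empDist_eq_sum (f : Fin n → α) (u : α) :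
    empDist f u = ∑ i with f i = u, (n : ℝ)⁻¹ := by
  rw [empDist, Nat.card_eq_fintype_card, Fintype.card_subtype, Finset.sum_const, nsmul_eq_mul,
    div_eq_mul_inv]

theorem support_empDist_subset (f : Fin n → α) :
    Function.support (empDist f) ⊆ Set.range f := by
  intro u hu
  by_contra hf
  refine hu ?_
  classical
  rw [empDist_eq_sum, Finset.sum_eq_zero]
  intro i hi
  exact absurd ⟨i, (Finset.mem_filter.1 hi).2⟩ hf

theorem finsum_empDist_mul (f : Fin n → α) (g : α → ℝ) :
    ∑ᶠ u, empDist f u * g u = (∑ i, g (f i)) / n := by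
  classical
  simp_rw [empDist_eq_sum, Finset.sum_mul, Finset.sum_div]
  rw [← finsum_sum_filter f Finset.univ]
  refine finsum_congr fun u => Finset.sum_congr rfl fun i hi => ?_
  rw [(Finset.mem_filter.1 hi).2, inv_mul_eq_div]

theorem finsum_empDist (hn : 0 < n) (f : Fin n → α) : ∑ᶠ u, empDist f u = 1 := by
  simpa [hn.ne'] using finsum_empDist_mul f 1

theorem isDist_empDist (hn : 0 < n) (f : Fin n → α) : IsDist (empDist f) :=
  ⟨fun _ => by unfold empDist; positivity,
    (Set.finite_range f).subset (support_empDist_subset f), finsum_empDist hn f⟩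

theorem finsum_empDist_pair_left (f : Fin n → α) (g : Fin n → β) (a : α) :
    ∑ᶠ b, empDist (fun i => (f i, g i)) (a, b) = empDist f a := by
  classical
  simp_rw [empDist_eq_sum, Prod.mk.injEq, ← Finset.filter_filter]
  exact finsum_sum_filter g _ _

theorem finsum_empDist_pair_right (f : Fin n → α) (g : Fin n → β) (b : β) :
    ∑ᶠ a, empDist (fun i => (f i, g i)) (a, b) = empDist g b := by
  classical
  simp_rw [empDist_eq_sum, Prod.mk.injEq, and_comm (a := f _ = _), ← Finset.filter_filter]
  exact finsum_sum_filter f _ _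

theorem isCoupling_empDist_pair (hn : 0 < n) (f : Fin n → α) (g : Fin n → β) :
    IsCoupling (empDist fun i => (f i, g i)) (empDist f) (empDist g) :=
  ⟨isDist_empDist hn _, finsum_empDist_pair_left f g, finsum_empDist_pair_right f g⟩

end EmpiricalDistribution

theorem dEM_le_of_isCoupling {Ω : Type*} {d : Ω → Ω → ℝ} (hd : ∀ x y, 0 ≤ d x y)
    {μ τ : Ω → ℝ} {T : Ω × Ω → ℝ} (hT : IsCoupling T μ τ) :
    dEM d μ τ ≤ ∑ᶠ p : Ω × Ω, T p * d p.1 p.2 := by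
  refine csInf_le ⟨0, ?_⟩ ⟨T, hT, rfl⟩
  rintro c ⟨T', hT', rfl⟩
  exact finsum_nonneg fun p => mul_nonneg (hT'.1.1 p) (hd _ _)

theorem dEM_empDist_le_average {Ω : Type*} {d : Ω → Ω → ℝ} (hd : ∀ x y, 0 ≤ d x y)
    {n : ℕ} (hn : 0 < n) (t w : Fin n → Ω) :
    dEM d (empDist t) (empDist w) ≤ (∑ i, d (t i) (w i)) / n := by
  simpa only [finsum_empDist_mul _ fun p : Ω × Ω => d p.1 p.2] using
    dEM_le_of_isCoupling hd (isCoupling_empDist_pair hn t w)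

section WeightedL1

variable {V : Type*} [Fintype V] {η : V → ℝ}

theorem sum_eq_one_of_isDist (hη : IsDist η) : ∑ v, η v = 1 := by
  rw [← finsum_eq_sum_of_fintype]
  exact hη.2.2

theorem wl1_eq_sum (x y : V → ℝ) : wl1 η x y = ∑ v, η v * |x v - y v| :=
  finsum_eq_sum_of_fintype _

theorem wl1_nonneg (hη : ∀ v, 0 ≤ η v) (x y : V → ℝ) : 0 ≤ wl1 η x y := by
  rw [wl1_eq_sum]
  exact Finset.sum_nonneg fun v _ => mul_nonneg (hη v) (abs_nonneg _)

theorem wl1_le_one (hη : IsDist η) {x y : V → ℝ} (h : ∀ v, |x v - y v| ≤ 1) :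
    wl1 η x y ≤ 1 := by
  rw [wl1_eq_sum, ← sum_eq_one_of_isDist hη]
  exact Finset.sum_le_sum fun v _ => mul_le_of_le_one_right (hη.1 v) (h v)

theorem wl1_le_two_mul (hη : IsDist η) {ρ : ℝ} (hρ : 0 ≤ ρ) {x y : V → ℝ}
    (h : ∀ v, |x v - y v| ≤ 1) (hclose : ∀ v, ρ / Fintype.card V ≤ η v → |x v - y v| ≤ ρ) :
    wl1 η x y ≤ 2 * ρ := by
  have hterm : ∀ v, η v * |x v - y v| ≤ ρ * η v + ρ / Fintype.card V := by
    intro v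
    have hη0 := hη.1 v
    by_cases hv : ρ / Fintype.card V ≤ η v
    · nlinarith [hclose v hv, div_nonneg hρ (Nat.cast_nonneg (Fintype.card V))]
    · nlinarith [h v]
  have hlight : (Fintype.card V : ℝ) * (ρ / Fintype.card V) ≤ ρ := by
    rcases (Nat.cast_nonneg (Fintype.card V) : (0 : ℝ) ≤ _).eq_or_lt with hV | hV
    · rw [← hV, zero_mul]; exact hρ
    · rw [mul_div_cancel₀ _ hV.ne']
  calc wl1 η x y ≤ ∑ v, (ρ * η v + ρ / Fintype.card V) := by
        rw [wl1_eq_sum]; exact Finset.sum_le_sum fun v _ => hterm v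
    _ = ρ + Fintype.card V * (ρ / Fintype.card V) := by
        rw [Finset.sum_add_distrib, ← Finset.mul_sum, sum_eq_one_of_isDist hη, Finset.sum_const,
          Finset.card_univ, nsmul_eq_mul, mul_one]
    _ ≤ 2 * ρ := by linarith

end WeightedL1

end HugeObject

/-- if for at least (1−ρ)·n of the indices i the vector w_i
approximates t_i to within ρ on every v of η-weight at least ρ/r, then the
empirical distributions of the t_i's and of the w_i's are 3ρ-close in the
η-weighted Earth Mover distance. -/
theorem emd_of_good_sample {V : Type*} [Fintype V] (r n : ℕ) (hr : Fintype.card V = r)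
    (hn : 0 < n) (η : V → ℝ) (hη : IsDist η) (ρ : ℝ) (hρ : ρ ∈ Set.Ioo (0 : ℝ) 1)
    (t w : Fin n → V → ℝ)
    (ht : ∀ i v, t i v ∈ Set.Icc (0 : ℝ) 1) (hw : ∀ i v, w i v ∈ Set.Icc (0 : ℝ) 1)
    (h : (1 - ρ) * n ≤
      (Nat.card {i : Fin n // ∀ v, ρ / r ≤ η v → |t i v - w i v| ≤ ρ} : ℝ)) :
    dEM (wl1 η) (empDist t) (empDist w) ≤ 3 * ρ := by
  subst hr
  have hρ0 : 0 ≤ ρ := hρ.1.le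
  have hdiff : ∀ i v, |t i v - w i v| ≤ 1 := fun i v => by
    rw [abs_sub_le_iff]
    constructor <;> linarith [(ht i v).1, (ht i v).2, (hw i v).1, (hw i v).2]
  have hsum : ∑ i, wl1 η (t i) (w i) ≤ (2 * ρ + ρ) * n := by
    simpa using Fintype.sum_le_of_card_subtype_ge _ (by positivity)
      (fun i => wl1_le_one hη (hdiff i)) (fun i => wl1_le_two_mul hη hρ0 (hdiff i))
      (by simpa using h)
  calc dEM (wl1 η) (empDist t) (empDist w) ≤ (∑ i, wl1 η (t i) (w i)) / n :=
        dEM_empDist_le_average (wl1_nonneg hη.1) hn t w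
    _ ≤ 3 * ρ := by
        rw [div_le_iff₀ (Nat.cast_pos.2 hn)]
        linarith
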